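/- arXiv:2011.00629 — 2 statements merged into one kernel-verified Lean document; each statement's English description precedes it below -/
import Mathlib

section
/- Let m ≤ n, θ ∈ (0,1), μ a Borel probability measure on ℝᵐ, and ν a Borel probability measure on ℝⁿ. Then inf_{β ∈ Φ⁻(ν,m)} D_JS(μ, β) = inf_{α ∈ Φ⁺(μ,n)} D_JS(α, ν). -/
open MeasureTheory ENNReal

noncomputable section

/-- The affine map `x ↦ Vx + b` from `ℝⁿ` to `ℝᵐ` (Euclidean spaces). -/
def phiAff {m n : ℕ} (V : Matrix (Fin m) (Fin n) ℝ)
    (b : EuclideanSpace ℝ (Fin m)) (x : EuclideanSpace ℝ (Fin n)) :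
    EuclideanSpace ℝ (Fin m) :=
  (EuclideanSpace.equiv (Fin m) ℝ).symm
    (V.mulVec (EuclideanSpace.equiv (Fin n) ℝ x) + (EuclideanSpace.equiv (Fin m) ℝ) b)

/-- The `p`-Wasserstein distance: infimum over couplings of
`(∫ ‖x − y‖^p dγ)^{1/p}` (Euclidean norm). -/
def wassersteinDist (p : ℝ) {k : ℕ}
    (μ ν : Measure (EuclideanSpace ℝ (Fin k))) : ℝ :=
  sInf {r : ℝ | ∃ γ : Measure (EuclideanSpace ℝ (Fin k) × EuclideanSpace ℝ (Fin k)),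
    γ.map Prod.fst = μ ∧ γ.map Prod.snd = ν ∧
    r = (∫ z, ‖z.1 - z.2‖ ^ p ∂γ) ^ (1 / p)}

/-- The `f`-divergence `D_f(μ‖ν) = ∫ f(dμ/dν) dν`. -/
def fDivergence (f : ℝ → ℝ) {k : ℕ}
    (μ ν : Measure (EuclideanSpace ℝ (Fin k))) : ℝ :=
  ∫ x, f ((μ.rnDeriv ν x).toReal) ∂ν

/-- The Kullback–Leibler divergence `∫ log(dμ/dν) dμ`. -/
def klDivergence {k : ℕ} (μ ν : Measure (EuclideanSpace ℝ (Fin k))) : ℝ :=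
  ∫ x, Real.log ((μ.rnDeriv ν x).toReal) ∂μ

/-- The mixture `(1−θ)μ + θν`. -/
def mixture (θ : ℝ) {k : ℕ} (μ ν : Measure (EuclideanSpace ℝ (Fin k))) :
    Measure (EuclideanSpace ℝ (Fin k)) :=
  ENNReal.ofReal (1 - θ) • μ + ENNReal.ofReal θ • ν

/-- The θ-weighted Jensen–Shannon divergence. -/
def jsDivergence (θ : ℝ) {k : ℕ} (μ ν : Measure (EuclideanSpace ℝ (Fin k))) : ℝ :=
  (1 / 2) * klDivergence μ (mixture θ μ ν) + (1 / 2) * klDivergence ν (mixture θ ν μ)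

/-- The total variation metric `sup_A |μ(A) − ν(A)|`. -/
def tvDist {k : ℕ} (μ ν : Measure (EuclideanSpace ℝ (Fin k))) : ℝ :=
  sSup {r : ℝ | ∃ A : Set (EuclideanSpace ℝ (Fin k)), MeasurableSet A ∧
    r = |(μ A).toReal - (ν A).toReal|}

/-- The Hellinger squared divergence `∫ (√(dμ/dν) − 1)² dν`. -/
def hellingerSq {k : ℕ} (μ ν : Measure (EuclideanSpace ℝ (Fin k))) : ℝ :=
  ∫ x, (Real.sqrt ((μ.rnDeriv ν x).toReal) - 1) ^ 2 ∂ν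

/-- `ν` has a strictly positive density w.r.t. Lebesgue measure. -/
def HasPosDensity {k : ℕ} (ν : Measure (EuclideanSpace ℝ (Fin k))) : Prop :=
  ∃ t : EuclideanSpace ℝ (Fin k) → ℝ, Measurable t ∧ (∀ x, 0 < t x) ∧
    ν = volume.withDensity fun x => ENNReal.ofReal (t x)

end

/-! Data processing: `JS(φ_* α, φ_* ν) ≤ JS(α, ν)` for every measurable `φ`, so each value of the
right-hand infimum dominates a value of the left-hand one. Conversely, if `φ` has a measurable
right inverse `ψ`, write `μ = μₛ + (φ_* ν).withDensity r` (Lebesgue decomposition) and lift `μ` to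
`α = ν.withDensity (r ∘ φ) + ψ_* μₛ`. Then `φ_* α = μ`, and `α`, `ν` both have densities of the form
`f ∘ φ` with respect to `ν + ψ_* μₛ`; hence so do `α` and `ν` with respect to their mixtures, `φ` is
sufficient for the pair, and `JS(α, ν) = JS(μ, φ_* ν)`. The two sets of values therefore dominate
each other and have the same infimum. -/

section RadonNikodym

variable {X Y : Type*} [MeasurableSpace X] [MeasurableSpace Y]

theorem map_withDensity_comp {φ : X → Y} (hφ : Measurable φ) (ρ : Measure X) {f : Y → ℝ≥0∞}
    (hf : Measurable f) : (ρ.withDensity (f ∘ φ)).map φ = (ρ.map φ).withDensity f := by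
  ext s hs
  rw [Measure.map_apply hφ hs, withDensity_apply _ (hφ hs), withDensity_apply _ hs,
    setLIntegral_map hs hf hφ]
  rfl

theorem integral_log_rnDeriv_map_of_eq_withDensity_comp {φ : X → Y} (hφ : Measurable φ)
    {α Λ : Measure X} [IsFiniteMeasure Λ] {G : Y → ℝ≥0∞} (hG : Measurable G)
    (hα : α = Λ.withDensity (G ∘ φ)) :
    ∫ y, Real.log ((α.map φ).rnDeriv (Λ.map φ) y).toReal ∂(α.map φ) =
      ∫ x, Real.log (α.rnDeriv Λ x).toReal ∂α := by
  have hac : α ≪ Λ := hα ▸ withDensity_absolutelyContinuous Λ _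
  have hrn : α.rnDeriv Λ =ᵐ[Λ] G ∘ φ := hα ▸ Measure.rnDeriv_withDensity Λ (hG.comp hφ)
  have hrn_map : (α.map φ).rnDeriv (Λ.map φ) =ᵐ[Λ.map φ] G := by
    rw [hα, map_withDensity_comp hφ Λ hG]
    exact Measure.rnDeriv_withDensity _ hG
  calc ∫ y, Real.log ((α.map φ).rnDeriv (Λ.map φ) y).toReal ∂(α.map φ)
      = ∫ y, Real.log (G y).toReal ∂(α.map φ) :=
        integral_congr_ae <| ((hac.map hφ).ae_eq hrn_map).fun_comp fun g => Real.log g.toReal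
    _ = ∫ x, Real.log (G (φ x)).toReal ∂α :=
        integral_map hφ.aemeasurable hG.ennreal_toReal.log.aestronglyMeasurable
    _ = ∫ x, Real.log (α.rnDeriv Λ x).toReal ∂α :=
        integral_congr_ae <| ((hac.ae_eq hrn).fun_comp fun g => Real.log g.toReal).symm

/-- Gibbs' inequality, from `log w ≥ 1 - w⁻¹`. -/
theorem integral_log_nonneg_of_lintegral_inv_le {α : Measure X} [IsFiniteMeasure α]
    {w : X → ℝ≥0∞} (hw : AEMeasurable w α) (hw_zero : ∀ᵐ x ∂α, w x ≠ 0)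
    (hw_top : ∀ᵐ x ∂α, w x ≠ ∞) (hint : Integrable (fun x => Real.log (w x).toReal) α)
    (hinv : ∫⁻ x, (w x)⁻¹ ∂α ≤ α Set.univ) :
    0 ≤ ∫ x, Real.log (w x).toReal ∂α := by
  have hinv_top : ∫⁻ x, (w x)⁻¹ ∂α ≠ ∞ := ne_top_of_le_ne_top (measure_ne_top α _) hinv
  have hint_inv : Integrable (fun x => ((w x)⁻¹).toReal) α :=
    integrable_toReal_of_lintegral_ne_top hw.inv hinv_top
  have hlog : ∀ᵐ x ∂α, 1 - ((w x)⁻¹).toReal ≤ Real.log (w x).toReal := by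
    filter_upwards [hw_zero, hw_top] with x h0 htop
    have hpos : 0 < (w x).toReal := ENNReal.toReal_pos h0 htop
    have := Real.log_le_sub_one_of_pos (inv_pos.mpr hpos)
    rw [Real.log_inv] at this
    rw [ENNReal.toReal_inv]
    linarith
  have hinv_le : ∫ x, ((w x)⁻¹).toReal ∂α ≤ α.real Set.univ := by
    have hfin : ∀ᵐ x ∂α, (w x)⁻¹ < ∞ := by
      filter_upwards [hw_zero] with x h using ENNReal.inv_lt_top.mpr (pos_iff_ne_zero.mpr h)
    rw [integral_toReal (f := fun x => (w x)⁻¹) hw.inv hfin]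
    exact ENNReal.toReal_mono (measure_ne_top α _) hinv
  calc (0 : ℝ) ≤ α.real Set.univ - ∫ x, ((w x)⁻¹).toReal ∂α := sub_nonneg.mpr hinv_le
    _ = ∫ x, (1 - ((w x)⁻¹).toReal) ∂α := by
        rw [integral_sub (integrable_const 1) hint_inv]; simp
    _ ≤ ∫ x, Real.log (w x).toReal ∂α :=
        integral_mono_ae ((integrable_const 1).sub hint_inv) hint hlog

theorem lintegral_inv_rnDeriv_mul_le {α Λ : Measure X} [α.HaveLebesgueDecomposition Λ]
    (hac : α ≪ Λ) {f : X → ℝ≥0∞} (hf : Measurable f) :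
    ∫⁻ x, (α.rnDeriv Λ x)⁻¹ * f x ∂α ≤ ∫⁻ x, f x ∂Λ := by
  rw [← lintegral_rnDeriv_mul hac (f := fun x => (α.rnDeriv Λ x)⁻¹ * f x)
    ((Measure.measurable_rnDeriv α Λ).inv.mul hf).aemeasurable]
  refine lintegral_mono fun x => ?_
  rw [← mul_assoc]
  exact mul_le_of_le_one_left' (ENNReal.mul_inv_le_one _)

theorem integrable_log_rnDeriv_of_le {α Λ : Measure X} [IsFiniteMeasure α] [IsFiniteMeasure Λ]
    (hac : α ≪ Λ) {C : ℝ≥0∞} (hC : C ≠ ∞) (hle : ∀ᵐ x ∂Λ, α.rnDeriv Λ x ≤ C) :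
    Integrable (fun x => Real.log (α.rnDeriv Λ x).toReal) α := by
  have hmeas := Measure.measurable_rnDeriv α Λ
  have hint_inv : Integrable (fun x => ((α.rnDeriv Λ x)⁻¹).toReal) α := by
    refine integrable_toReal_of_lintegral_ne_top hmeas.inv.aemeasurable (ne_top_of_le_ne_top
      (measure_ne_top Λ Set.univ) ?_)
    simpa using lintegral_inv_rnDeriv_mul_le hac measurable_const (f := 1)
  refine (hint_inv.add (integrable_const C.toReal)).mono'
    hmeas.ennreal_toReal.log.aestronglyMeasurable ?_
  filter_upwards [Measure.rnDeriv_pos hac, hac.ae_le (Measure.rnDeriv_ne_top α Λ),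
    hac.ae_le hle] with x h0 htop hxC
  have hpos : 0 < (α.rnDeriv Λ x).toReal := ENNReal.toReal_pos h0.ne' htop
  have hlow := Real.log_le_sub_one_of_pos (inv_pos.mpr hpos)
  have hup := Real.log_le_sub_one_of_pos hpos
  rw [Real.log_inv] at hlow
  have := ENNReal.toReal_mono hC hxC
  simp only [Real.norm_eq_abs, abs_le, Pi.add_apply, ENNReal.toReal_inv]
  constructor <;> linarith [inv_nonneg.mpr hpos.le]

theorem lintegral_inv_rnDeriv_mul_rnDeriv_map_le {φ : X → Y} (hφ : Measurable φ)
    {α Λ : Measure X} [IsFiniteMeasure α] [IsFiniteMeasure Λ] (hac : α ≪ Λ) :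
    ∫⁻ x, (α.rnDeriv Λ x)⁻¹ * (α.map φ).rnDeriv (Λ.map φ) (φ x) ∂α ≤ α Set.univ := by
  have hG := Measure.measurable_rnDeriv (α.map φ) (Λ.map φ)
  calc ∫⁻ x, (α.rnDeriv Λ x)⁻¹ * (α.map φ).rnDeriv (Λ.map φ) (φ x) ∂α
      ≤ ∫⁻ x, (α.map φ).rnDeriv (Λ.map φ) (φ x) ∂Λ := lintegral_inv_rnDeriv_mul_le hac (hG.comp hφ)
    _ = ∫⁻ y, (α.map φ).rnDeriv (Λ.map φ) y ∂(Λ.map φ) := (lintegral_map hG hφ).symm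
    _ ≤ (α.map φ) Set.univ := Measure.lintegral_rnDeriv_le
    _ = α Set.univ := Measure.map_apply hφ MeasurableSet.univ

/-- The data processing inequality for relative entropy. -/
theorem integral_log_rnDeriv_map_le {φ : X → Y} (hφ : Measurable φ) {α Λ : Measure X}
    [IsFiniteMeasure α] [IsFiniteMeasure Λ] (hac : α ≪ Λ)
    (hint : Integrable (fun x => Real.log (α.rnDeriv Λ x).toReal) α)
    (hint_map : Integrable (fun y => Real.log ((α.map φ).rnDeriv (Λ.map φ) y).toReal) (α.map φ)) :
    ∫ y, Real.log ((α.map φ).rnDeriv (Λ.map φ) y).toReal ∂(α.map φ) ≤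
      ∫ x, Real.log (α.rnDeriv Λ x).toReal ∂α := by
  set g := α.rnDeriv Λ
  set G := (α.map φ).rnDeriv (Λ.map φ)
  have hg := Measure.measurable_rnDeriv α Λ
  have hG := Measure.measurable_rnDeriv (α.map φ) (Λ.map φ)
  have hac_map : α.map φ ≪ Λ.map φ := hac.map hφ
  have hG_pos : ∀ᵐ x ∂α, G (φ x) ≠ 0 :=
    ae_of_ae_map hφ.aemeasurable <| (Measure.rnDeriv_pos hac_map).mono fun _ h => h.ne'
  have hG_top : ∀ᵐ x ∂α, G (φ x) ≠ ∞ :=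
    ae_of_ae_map hφ.aemeasurable <| hac_map.ae_le (Measure.rnDeriv_ne_top _ _)
  have hint_comp : Integrable (fun x => Real.log (G (φ x)).toReal) α :=
    (integrable_map_measure hG.ennreal_toReal.log.aestronglyMeasurable hφ.aemeasurable).mp
      hint_map
  have hg_pos := Measure.rnDeriv_pos hac
  have hg_top := hac.ae_le (Measure.rnDeriv_ne_top α Λ)
  have hlog : (fun x => Real.log (g x * (G (φ x))⁻¹).toReal) =ᵐ[α]
      fun x => Real.log (g x).toReal - Real.log (G (φ x)).toReal := by
    filter_upwards [hg_pos, hg_top, hG_pos, hG_top] with x h0 htop hG0 hGtop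
    rw [ENNReal.toReal_mul, ENNReal.toReal_inv, Real.log_mul (ENNReal.toReal_pos h0.ne' htop).ne'
      (inv_pos.mpr (ENNReal.toReal_pos hG0 hGtop)).ne', Real.log_inv, sub_eq_add_neg]
  have hinv : ∫⁻ x, (g x * (G (φ x))⁻¹)⁻¹ ∂α ≤ α Set.univ := by
    refine le_of_eq_of_le (lintegral_congr_ae ?_) (lintegral_inv_rnDeriv_mul_rnDeriv_map_le hφ hac)
    filter_upwards [hG_pos, hG_top] with x hG0 hGtop
    rw [ENNReal.mul_inv (Or.inr (ENNReal.inv_ne_top.mpr hG0))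
      (Or.inr (ENNReal.inv_ne_zero.mpr hGtop)), inv_inv]
  have hgibbs := integral_log_nonneg_of_lintegral_inv_le (w := fun x => g x * (G (φ x))⁻¹)
    (hg.mul (hG.comp hφ).inv).aemeasurable
    (by filter_upwards [hg_pos, hG_top] with x h0 htop
        exact mul_ne_zero h0.ne' (ENNReal.inv_ne_zero.mpr htop))
    (by filter_upwards [hg_top, hG_pos] with x htop h0
        exact ENNReal.mul_ne_top htop (ENNReal.inv_ne_top.mpr h0))
    ((hint.sub hint_comp).congr hlog.symm) hinv
  rw [integral_congr_ae hlog, integral_sub hint hint_comp] at hgibbs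
  rw [integral_map hφ.aemeasurable hG.ennreal_toReal.log.aestronglyMeasurable]
  linarith

theorem exists_withDensity_comp_map_eq {φ : X → Y} (hφ : Measurable φ) {ψ : Y → X}
    (hψ : Measurable ψ) (hsec : ∀ y, φ (ψ y) = y) (μ : Measure Y) [IsFiniteMeasure μ]
    (ν : Measure X) [IsFiniteMeasure ν] :
    ∃ (ρ : Measure X) (p q : Y → ℝ≥0∞), Measurable p ∧ Measurable q ∧ (∀ y, p y ≠ ∞) ∧
      (∀ y, q y ≠ ∞) ∧ ν = ρ.withDensity (q ∘ φ) ∧ (ρ.withDensity (p ∘ φ)).map φ = μ := by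
  classical
  set β := ν.map φ
  set r := μ.rnDeriv β
  set σ := μ.singularPart β
  obtain ⟨T, hT, hσT, hβT⟩ := Measure.mutuallySingular_singularPart μ β
  set p : Y → ℝ≥0∞ := T.piecewise (fun y => (r y).toNNReal) 1
  set q : Y → ℝ≥0∞ := T.indicator 1
  have hσ_ae : ∀ᵐ y ∂σ, y ∉ T := measure_eq_zero_iff_ae_notMem.mp hσT
  have hβ_ae : ∀ᵐ y ∂β, y ∈ T := ae_iff.mpr hβT
  have hφψ : φ ∘ ψ = id := funext hsec
  have hp : Measurable p := Measurable.piecewise hT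
    (Measure.measurable_rnDeriv μ β).ennreal_toNNReal.coe_nnreal_ennreal measurable_const
  have hq : Measurable q := measurable_const.indicator hT
  refine ⟨ν + σ.map ψ, p, q, hp, hq, ?_, ?_, ?_, ?_⟩
  · intro y
    by_cases hy : y ∈ T <;> simp [p, hy]
  · intro y
    by_cases hy : y ∈ T <;> simp [q, hy]
  · have hν : q ∘ φ =ᵐ[ν] 1 :=
      ae_of_ae_map hφ.aemeasurable (p := fun y => q y = 1) <|
        hβ_ae.mono fun y hy => by simp [q, hy]
    have hσψ : q ∘ φ =ᵐ[σ.map ψ] 0 := by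
      refine (ae_map_iff hψ.aemeasurable
        (measurableSet_eq_fun (hq.comp hφ) measurable_const)).mpr ?_
      exact hσ_ae.mono fun y hy => by simp [q, hsec, hy]
    rw [withDensity_add_measure, withDensity_congr_ae hν, withDensity_congr_ae hσψ]
    simp
  · have hβp : p =ᵐ[β] r := by
      filter_upwards [hβ_ae, Measure.rnDeriv_ne_top μ β] with y hy htop
      simp only [p, Set.piecewise_eq_of_mem _ _ _ hy]
      exact ENNReal.coe_toNNReal htop
    have hσp : p =ᵐ[σ] 1 := hσ_ae.mono fun y hy => by simp [p, hy]
    rw [map_withDensity_comp hφ _ hp, Measure.map_add _ _ hφ, Measure.map_map hφ hψ, hφψ,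
      Measure.map_id, withDensity_add_measure, withDensity_congr_ae hβp, withDensity_congr_ae hσp,
      withDensity_one, add_comm]
    exact (μ.haveLebesgueDecomposition_add β).symm

end RadonNikodym

local notation "E" k => EuclideanSpace ℝ (Fin k)

section Mixture

variable {θ : ℝ} {k m n : ℕ}

-- Instance search does not reach the σ-finite instance for measures on `EuclideanSpace`.
attribute [local instance] Measure.haveLebesgueDecomposition_of_finiteMeasure

instance (μ ν : Measure (E k)) [IsFiniteMeasure μ] [IsFiniteMeasure ν] :
    IsFiniteMeasure (mixture θ μ ν) :=
  inferInstanceAs (IsFiniteMeasure ((1 - θ).toNNReal • μ + θ.toNNReal • ν))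

theorem absolutelyContinuous_mixture (hθ : θ < 1) (μ ν : Measure (E k)) : μ ≪ mixture θ μ ν :=
  (Measure.absolutelyContinuous_smul (by simpa using hθ)).add_right _

theorem rnDeriv_mixture_le (μ ν : Measure (E k)) [IsFiniteMeasure μ] [IsFiniteMeasure ν] :
    ∀ᵐ x ∂mixture θ μ ν, μ.rnDeriv (mixture θ μ ν) x ≤ (ENNReal.ofReal (1 - θ))⁻¹ := by
  have hle : ENNReal.ofReal (1 - θ) • μ ≤ mixture θ μ ν := Measure.le_add_right le_rfl
  filter_upwards [Measure.rnDeriv_le_one_of_le hle,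
    Measure.rnDeriv_smul_left_of_ne_top μ (mixture θ μ ν) ENNReal.ofReal_ne_top] with x h1 h2
  rw [h2] at h1
  rw [ENNReal.le_inv_iff_mul_le, mul_comm]
  simpa using h1

theorem integrable_log_rnDeriv_mixture (hθ : θ < 1) (μ ν : Measure (E k)) [IsFiniteMeasure μ]
    [IsFiniteMeasure ν] : Integrable (fun x => Real.log (μ.rnDeriv (mixture θ μ ν) x).toReal) μ :=
  integrable_log_rnDeriv_of_le (absolutelyContinuous_mixture hθ μ ν)
    (ENNReal.inv_ne_top.mpr (by simpa using hθ)) (rnDeriv_mixture_le μ ν)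

theorem map_mixture {φ : (E n) → E m} (hφ : Measurable φ) (μ ν : Measure (E n)) :
    (mixture θ μ ν).map φ = mixture θ (μ.map φ) (ν.map φ) := by
  rw [mixture, Measure.map_add _ _ hφ, Measure.map_smul, Measure.map_smul, mixture]

theorem mixture_withDensity (ρ : Measure (E k)) {f : (E k) → ℝ≥0∞} (hf : Measurable f)
    (g : (E k) → ℝ≥0∞) :
    mixture θ (ρ.withDensity f) (ρ.withDensity g) =
      ρ.withDensity fun x => ENNReal.ofReal (1 - θ) * f x + ENNReal.ofReal θ * g x := by
  rw [mixture, ← withDensity_smul' _ _ ENNReal.ofReal_ne_top,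
    ← withDensity_smul' _ _ ENNReal.ofReal_ne_top, ← withDensity_add_left (hf.const_smul _)]
  rfl

theorem klDivergence_map_mixture_le (hθ : θ < 1) {φ : (E n) → E m} (hφ : Measurable φ)
    (μ ν : Measure (E n)) [IsFiniteMeasure μ] [IsFiniteMeasure ν] :
    klDivergence (μ.map φ) (mixture θ (μ.map φ) (ν.map φ)) ≤ klDivergence μ (mixture θ μ ν) := by
  have hint_map := integrable_log_rnDeriv_mixture hθ (μ.map φ) (ν.map φ)
  rw [← map_mixture hφ] at hint_map ⊢
  exact integral_log_rnDeriv_map_le hφ (absolutelyContinuous_mixture hθ μ ν)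
    (integrable_log_rnDeriv_mixture hθ μ ν) hint_map

theorem jsDivergence_map_le (hθ : θ < 1) {φ : (E n) → E m} (hφ : Measurable φ)
    (μ ν : Measure (E n)) [IsFiniteMeasure μ] [IsFiniteMeasure ν] :
    jsDivergence θ (μ.map φ) (ν.map φ) ≤ jsDivergence θ μ ν := by
  have h₁ := klDivergence_map_mixture_le hθ hφ μ ν
  have h₂ := klDivergence_map_mixture_le hθ hφ ν μ
  unfold jsDivergence
  linarith

theorem klDivergence_map_mixture_eq_of_withDensity_comp (hθ : θ < 1) {φ : (E n) → E m}
    (hφ : Measurable φ) {ρ α ν : Measure (E n)} [IsFiniteMeasure α] [IsFiniteMeasure ν]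
    {p q : (E m) → ℝ≥0∞} (hp : Measurable p) (hq : Measurable q) (hp_top : ∀ y, p y ≠ ∞)
    (hq_top : ∀ y, q y ≠ ∞) (hα : α = ρ.withDensity (p ∘ φ)) (hν : ν = ρ.withDensity (q ∘ φ)) :
    klDivergence (α.map φ) (mixture θ (α.map φ) (ν.map φ)) = klDivergence α (mixture θ α ν) := by
  set c : (E m) → ℝ≥0∞ := fun y => ENNReal.ofReal (1 - θ) * p y + ENNReal.ofReal θ * q y
  have hc : Measurable c := (hp.const_mul _).add (hq.const_mul _)
  have hmix : mixture θ α ν = ρ.withDensity (c ∘ φ) := by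
    rw [hα, hν, mixture_withDensity ρ (hp.comp hφ)]
    rfl
  have hα_mix : α = (mixture θ α ν).withDensity ((p / c) ∘ φ) := by
    rw [hmix, ← withDensity_mul _ (hc.comp hφ) ((hp.div hc).comp hφ)]
    conv_lhs => rw [hα]
    congr 1
    funext x
    simp only [Function.comp, Pi.mul_apply]
    by_cases hp0 : p (φ x) = 0
    · simp [hp0]
    · refine (ENNReal.mul_div_cancel ?_ ?_).symm
      · intro hc0
        exact hp0 ((mul_eq_zero.mp (add_eq_zero.mp hc0).1).resolve_left (by simpa using hθ))
      · simp [c, ENNReal.mul_eq_top, hp_top, hq_top]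
  unfold klDivergence
  rw [← map_mixture hφ]
  exact integral_log_rnDeriv_map_of_eq_withDensity_comp hφ (hp.div hc) hα_mix

theorem jsDivergence_map_eq_of_withDensity_comp (hθ : θ < 1) {φ : (E n) → E m}
    (hφ : Measurable φ) {ρ α ν : Measure (E n)} [IsFiniteMeasure α] [IsFiniteMeasure ν]
    {p q : (E m) → ℝ≥0∞} (hp : Measurable p) (hq : Measurable q) (hp_top : ∀ y, p y ≠ ∞)
    (hq_top : ∀ y, q y ≠ ∞) (hα : α = ρ.withDensity (p ∘ φ)) (hν : ν = ρ.withDensity (q ∘ φ)) :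
    jsDivergence θ (α.map φ) (ν.map φ) = jsDivergence θ α ν := by
  unfold jsDivergence
  rw [klDivergence_map_mixture_eq_of_withDensity_comp hθ hφ hp hq hp_top hq_top hα hν,
    klDivergence_map_mixture_eq_of_withDensity_comp hθ hφ hq hp hq_top hp_top hν hα]

theorem exists_map_eq_jsDivergence_eq (hθ : θ < 1) {φ : (E n) → E m} (hφ : Measurable φ)
    {ψ : (E m) → E n} (hψ : Measurable ψ) (hsec : ∀ y, φ (ψ y) = y) (μ : Measure (E m))
    [IsProbabilityMeasure μ] (ν : Measure (E n)) [IsFiniteMeasure ν] :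
    ∃ α : Measure (E n), IsProbabilityMeasure α ∧ α.map φ = μ ∧
      jsDivergence θ α ν = jsDivergence θ μ (ν.map φ) := by
  obtain ⟨ρ, p, q, hp, hq, hp_top, hq_top, hν, hmap⟩ :=
    exists_withDensity_comp_map_eq hφ hψ hsec μ ν
  have hα : IsProbabilityMeasure (ρ.withDensity (p ∘ φ)) := by
    have : IsProbabilityMeasure ((ρ.withDensity (p ∘ φ)).map φ) := hmap ▸ inferInstance
    exact Measure.isProbabilityMeasure_of_map φ
  refine ⟨_, hα, hmap, ?_⟩
  rw [← jsDivergence_map_eq_of_withDensity_comp hθ hφ hp hq hp_top hq_top rfl hν, hmap]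

end Mixture

section Affine

variable {m n : ℕ}

theorem continuous_phiAff (V : Matrix (Fin m) (Fin n) ℝ) (b : E m) :
    Continuous (phiAff V b) := by
  unfold phiAff
  fun_prop

theorem exists_measurable_phiAff_rightInverse {V : Matrix (Fin m) (Fin n) ℝ}
    (hV : V * V.transpose = 1) (b : E m) :
    ∃ ψ : (E m) → E n, Measurable ψ ∧ ∀ y, phiAff V b (ψ y) = y := by
  refine ⟨fun y => (EuclideanSpace.equiv (Fin n) ℝ).symm
    (V.transpose.mulVec (EuclideanSpace.equiv (Fin m) ℝ y - EuclideanSpace.equiv (Fin m) ℝ b)),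
    Continuous.measurable (by fun_prop), fun y => ?_⟩
  simp only [phiAff, ContinuousLinearEquiv.apply_symm_apply, Matrix.mulVec_mulVec, hV,
    Matrix.one_mulVec, sub_add_cancel, ContinuousLinearEquiv.symm_apply_apply]

end Affine

theorem projection_eq_embedding_jsDivergence_general {m n : ℕ} (θ : ℝ)
    (hθ : θ ∈ Set.Ioo (0 : ℝ) 1)
    (μ : Measure (EuclideanSpace ℝ (Fin m))) (ν : Measure (EuclideanSpace ℝ (Fin n)))
    [IsProbabilityMeasure μ] [IsProbabilityMeasure ν] :
    sInf {r : ℝ | ∃ (V : Matrix (Fin m) (Fin n) ℝ) (b : EuclideanSpace ℝ (Fin m)),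
        V * V.transpose = 1 ∧ r = jsDivergence θ μ (ν.map (phiAff V b))} =
    sInf {r : ℝ | ∃ α : Measure (EuclideanSpace ℝ (Fin n)), IsProbabilityMeasure α ∧
        (∃ (V : Matrix (Fin m) (Fin n) ℝ) (b : EuclideanSpace ℝ (Fin m)),
          V * V.transpose = 1 ∧ α.map (phiAff V b) = μ) ∧
        r = jsDivergence θ α ν} := by
  refine csInf_eq_csInf_of_forall_exists_le ?_ ?_
  · rintro _ ⟨V, b, hV, rfl⟩
    obtain ⟨ψ, hψ, hsec⟩ := exists_measurable_phiAff_rightInverse hV b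
    obtain ⟨α, hα, hmap, hjs⟩ := exists_map_eq_jsDivergence_eq hθ.2
      (continuous_phiAff V b).measurable hψ hsec μ ν
    exact ⟨_, ⟨α, hα, ⟨V, b, hV, hmap⟩, rfl⟩, hjs.le⟩
  · rintro _ ⟨α, hα, ⟨V, b, hV, rfl⟩, rfl⟩
    exact ⟨_, ⟨V, b, hV, rfl⟩, jsDivergence_map_le hθ.2 (continuous_phiAff V b).measurable α ν⟩

theorem projection_eq_embedding_jsDivergence {m n : ℕ} (hmn : m ≤ n) (θ : ℝ)
    (hθ : θ ∈ Set.Ioo (0 : ℝ) 1)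
    (μ : Measure (EuclideanSpace ℝ (Fin m))) (ν : Measure (EuclideanSpace ℝ (Fin n)))
    [IsProbabilityMeasure μ] [IsProbabilityMeasure ν] :
    sInf {r : ℝ | ∃ (V : Matrix (Fin m) (Fin n) ℝ) (b : EuclideanSpace ℝ (Fin m)),
        V * V.transpose = 1 ∧ r = jsDivergence θ μ (ν.map (phiAff V b))} =
    sInf {r : ℝ | ∃ α : Measure (EuclideanSpace ℝ (Fin n)), IsProbabilityMeasure α ∧
        (∃ (V : Matrix (Fin m) (Fin n) ℝ) (b : EuclideanSpace ℝ (Fin m)),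
          V * V.transpose = 1 ∧ α.map (phiAff V b) = μ) ∧
        r = jsDivergence θ α ν} :=
  projection_eq_embedding_jsDivergence_general θ hθ μ ν
end

section
/- Let m ≤ n, μ a Borel probability measure on ℝᵐ, and ν a Borel probability measure on ℝⁿ. Then the projection total variation distance equals the embedding total variation distance: inf_{β ∈ Φ⁻(ν,m)} d_TV(μ, β) = inf_{α ∈ Φ⁺(μ,n)} d_TV(α, ν). -/
open MeasureTheory ENNReal

/-!
Pushing measures forward along `φ = phiAff V b` can only decrease total variation, which gives
one inequality. For the other, disintegrate `ν` along `φ`: the conditional distribution `κ` of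
`x` given `φ x` is a Markov kernel with `κ ∘ₘ φ₊ν = ν` whose measures `κ y` live on the fibres
`φ⁻¹{y}` (after redefining `κ` on a null set using the right inverse `y ↦ Vᵀ(y - b)`). Then
`α = κ ∘ₘ μ` satisfies `φ₊α = μ`, and since Markov kernels contract total variation,
`d_TV(α, ν) = d_TV(κ ∘ₘ μ, κ ∘ₘ φ₊ν) ≤ d_TV(μ, φ₊ν)`.
-/

open ProbabilityTheory

section HahnDecomposition

variable {Ω : Type*} [MeasurableSpace Ω] {μ β : Measure Ω} {s : Set Ω} {f : Ω → ℝ≥0∞}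

lemma lintegral_add_measure_le_of_isHahnDecomposition (hs : IsHahnDecomposition β μ s)
    (hf : Measurable f) (hf1 : ∀ x, f x ≤ 1) :
    ∫⁻ x, f x ∂μ + β s ≤ ∫⁻ x, f x ∂β + μ s := by
  have split_one (τ : Measure Ω) : ∫⁻ x in s, f x ∂τ + ∫⁻ x in s, (1 - f x) ∂τ = τ s := by
    rw [← lintegral_add_left hf, ← setLIntegral_one s]
    congr with x
    exact add_tsub_cancel_of_le (hf1 x)
  have on_compl : ∫⁻ x in sᶜ, f x ∂μ ≤ ∫⁻ x in sᶜ, f x ∂β :=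
    lintegral_mono' hs.ge_on_compl le_rfl
  have on_set : ∫⁻ x in s, (1 - f x) ∂β ≤ ∫⁻ x in s, (1 - f x) ∂μ :=
    lintegral_mono' hs.le_on le_rfl
  calc ∫⁻ x, f x ∂μ + β s
      = ∫⁻ x in s, f x ∂μ + ∫⁻ x in sᶜ, f x ∂μ
          + (∫⁻ x in s, f x ∂β + ∫⁻ x in s, (1 - f x) ∂β) := by
        rw [lintegral_add_compl _ hs.measurableSet, split_one]
    _ ≤ ∫⁻ x in s, f x ∂μ + ∫⁻ x in sᶜ, f x ∂β
          + (∫⁻ x in s, f x ∂β + ∫⁻ x in s, (1 - f x) ∂μ) := by gcongr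
    _ = ∫⁻ x in s, f x ∂β + ∫⁻ x in sᶜ, f x ∂β
          + (∫⁻ x in s, f x ∂μ + ∫⁻ x in s, (1 - f x) ∂μ) := by ring
    _ = ∫⁻ x, f x ∂β + μ s := by
        rw [lintegral_add_compl _ hs.measurableSet, split_one]

end HahnDecomposition

section Disintegration

variable {X Y : Type*} [MeasurableSpace X] [StandardBorelSpace X] [Nonempty X]
  [MeasurableSpace Y] [StandardBorelSpace Y] [Nonempty Y] {φ : X → Y} {ψ : Y → X}

lemma exists_isMarkovKernel_comp_map_eq_and_map_eq_id (hφ : Measurable φ) (hψ : Measurable ψ)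
    (hφψ : Function.LeftInverse φ ψ) (ν : Measure X) [IsFiniteMeasure ν] :
    ∃ κ : Kernel Y X, IsMarkovKernel κ ∧ κ ∘ₘ ν.map φ = ν ∧ κ.map φ = Kernel.id := by
  classical
  set κ₀ := condDistrib id φ ν
  have hκ₀ : κ₀.map φ =ᵐ[ν.map φ] Kernel.id :=
    (condDistrib_comp φ aemeasurable_id hφ).symm.trans (condDistrib_self φ)
  set N := toMeasurable (ν.map φ) {y | κ₀.map φ y ≠ Kernel.id y}
  have hN : ∀ᵐ y ∂ν.map φ, y ∉ N := by
    rw [← measure_eq_zero_iff_ae_notMem, measure_toMeasurable]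
    exact hκ₀
  have hN_meas : MeasurableSet N := measurableSet_toMeasurable _ _
  refine ⟨Kernel.piecewise hN_meas (Kernel.deterministic ψ hψ) κ₀, inferInstance, ?_, ?_⟩
  · calc _ = κ₀ ∘ₘ ν.map φ := Measure.comp_congr <| by
          filter_upwards [hN] with y hy
          rw [Kernel.piecewise_apply, if_neg hy]
      _ = ν := by
          simpa using condDistrib_comp_map (μ := ν) (Y := id) hφ.aemeasurable aemeasurable_id
  · refine Kernel.ext fun y => ?_
    rw [Kernel.map_apply _ hφ, Kernel.piecewise_apply]
    split_ifs with hy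
    · rw [Kernel.deterministic_apply, Measure.map_dirac' hφ, hφψ y, Kernel.id_apply]
    · by_contra h
      refine hy (subset_toMeasurable _ _ ?_)
      rwa [Set.mem_ofPred_eq, Kernel.map_apply _ hφ]

end Disintegration

local notation "ℝ^" k => EuclideanSpace ℝ (Fin k)

section TotalVariation

variable {k : ℕ} {μ β : Measure (ℝ^k)}

lemma tvDist_le {c : ℝ} (h : ∀ A, MeasurableSet A → |(μ A).toReal - (β A).toReal| ≤ c) :
    tvDist μ β ≤ c :=
  csSup_le ⟨_, ∅, .empty, rfl⟩ (by rintro _ ⟨A, hA, rfl⟩; exact h A hA)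

variable [IsFiniteMeasure μ] [IsFiniteMeasure β]

lemma abs_toReal_sub_le_tvDist {A : Set (ℝ^k)} (hA : MeasurableSet A) :
    |(μ A).toReal - (β A).toReal| ≤ tvDist μ β := by
  refine le_csSup ⟨(μ Set.univ).toReal + (β Set.univ).toReal, ?_⟩ ⟨A, hA, rfl⟩
  rintro _ ⟨B, -, rfl⟩
  have hμ := ENNReal.toReal_mono (measure_ne_top μ _) (measure_mono (Set.subset_univ B))
  have hβ := ENNReal.toReal_mono (measure_ne_top β _) (measure_mono (Set.subset_univ B))
  rw [abs_sub_le_iff]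
  constructor <;> linarith [ENNReal.toReal_nonneg (a := μ B), ENNReal.toReal_nonneg (a := β B)]

lemma abs_toReal_lintegral_sub_le_tvDist {f : (ℝ^k) → ℝ≥0∞} (hf : Measurable f)
    (hf1 : ∀ x, f x ≤ 1) :
    |(∫⁻ x, f x ∂μ).toReal - (∫⁻ x, f x ∂β).toReal| ≤ tvDist μ β := by
  have hf_fin (τ : Measure (ℝ^k)) [IsFiniteMeasure τ] : ∫⁻ x, f x ∂τ ≠ ⊤ :=
    ((lintegral_mono hf1).trans_lt (by simp)).ne
  obtain ⟨s, hs⟩ := exists_isHahnDecomposition β μ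
  have h₁ := ENNReal.toReal_mono (ENNReal.add_ne_top.2 ⟨hf_fin β, measure_ne_top μ s⟩)
    (lintegral_add_measure_le_of_isHahnDecomposition hs hf hf1)
  have h₂ := ENNReal.toReal_mono (ENNReal.add_ne_top.2 ⟨hf_fin μ, measure_ne_top β sᶜ⟩)
    (lintegral_add_measure_le_of_isHahnDecomposition hs.compl hf hf1)
  rw [ENNReal.toReal_add (hf_fin μ) (measure_ne_top _ _),
    ENNReal.toReal_add (hf_fin β) (measure_ne_top _ _)] at h₁ h₂
  have hs₁ := abs_toReal_sub_le_tvDist (μ := μ) (β := β) hs.measurableSet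
  have hs₂ := abs_toReal_sub_le_tvDist (μ := μ) (β := β) hs.measurableSet.compl
  rw [abs_le] at hs₁ hs₂ ⊢
  constructor <;> linarith

lemma tvDist_comp_le {n : ℕ} (κ : Kernel (ℝ^k) (ℝ^n)) [IsMarkovKernel κ] :
    tvDist (κ ∘ₘ μ) (κ ∘ₘ β) ≤ tvDist μ β :=
  tvDist_le fun A hA => by
    rw [Measure.bind_apply hA κ.aemeasurable, Measure.bind_apply hA κ.aemeasurable]
    exact abs_toReal_lintegral_sub_le_tvDist (κ.measurable_coe hA) fun _ => prob_le_one

lemma tvDist_map_le {n : ℕ} {g : (ℝ^k) → ℝ^n} (hg : Measurable g) :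
    tvDist (μ.map g) (β.map g) ≤ tvDist μ β := by
  rw [← Measure.deterministic_comp_eq_map hg, ← Measure.deterministic_comp_eq_map hg]
  exact tvDist_comp_le _

end TotalVariation

lemma exists_map_eq_and_tvDist_le {m n : ℕ} {φ : (ℝ^n) → ℝ^m} {ψ : (ℝ^m) → ℝ^n}
    (hφ : Measurable φ) (hψ : Measurable ψ) (hφψ : Function.LeftInverse φ ψ)
    (μ : Measure (ℝ^m)) (ν : Measure (ℝ^n)) [IsProbabilityMeasure μ] [IsFiniteMeasure ν] :
    ∃ α : Measure (ℝ^n), IsProbabilityMeasure α ∧ α.map φ = μ ∧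
      tvDist α ν ≤ tvDist μ (ν.map φ) := by
  obtain ⟨κ, _, hκν, hκφ⟩ := exists_isMarkovKernel_comp_map_eq_and_map_eq_id hφ hψ hφψ ν
  refine ⟨κ ∘ₘ μ, inferInstance, by rw [Measure.map_comp _ _ hφ, hκφ, Measure.id_comp], ?_⟩
  calc tvDist (κ ∘ₘ μ) ν = tvDist (κ ∘ₘ μ) (κ ∘ₘ ν.map φ) := by rw [hκν]
    _ ≤ tvDist μ (ν.map φ) := tvDist_comp_le κ

lemma measurable_phiAff {m n : ℕ} (V : Matrix (Fin m) (Fin n) ℝ) (b : ℝ^m) :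
    Measurable (phiAff V b) := by
  unfold phiAff
  fun_prop

lemma exists_measurable_leftInverse_phiAff {m n : ℕ} {V : Matrix (Fin m) (Fin n) ℝ}
    (hV : V * V.transpose = 1) (b : ℝ^m) :
    ∃ ψ : (ℝ^m) → ℝ^n, Measurable ψ ∧ Function.LeftInverse (phiAff V b) ψ := by
  refine ⟨fun y => (EuclideanSpace.equiv (Fin n) ℝ).symm
    (V.transpose.mulVec (EuclideanSpace.equiv (Fin m) ℝ y - EuclideanSpace.equiv (Fin m) ℝ b)),
    by fun_prop, fun y => ?_⟩
  rw [phiAff, ContinuousLinearEquiv.apply_symm_apply, Matrix.mulVec_mulVec, hV,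
    Matrix.one_mulVec, sub_add_cancel, ContinuousLinearEquiv.symm_apply_apply]

theorem projection_eq_embedding_tv_general {m n : ℕ}
    (μ : Measure (EuclideanSpace ℝ (Fin m))) (ν : Measure (EuclideanSpace ℝ (Fin n)))
    [IsProbabilityMeasure μ] [IsProbabilityMeasure ν] :
    sInf {r : ℝ | ∃ (V : Matrix (Fin m) (Fin n) ℝ) (b : EuclideanSpace ℝ (Fin m)),
        V * V.transpose = 1 ∧ r = tvDist μ (ν.map (phiAff V b))} =
    sInf {r : ℝ | ∃ α : Measure (EuclideanSpace ℝ (Fin n)), IsProbabilityMeasure α ∧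
        (∃ (V : Matrix (Fin m) (Fin n) ℝ) (b : EuclideanSpace ℝ (Fin m)),
          V * V.transpose = 1 ∧ α.map (phiAff V b) = μ) ∧
        r = tvDist α ν} := by
  refine csInf_eq_csInf_of_forall_exists_le ?_ ?_
  · rintro _ ⟨V, b, hV, rfl⟩
    obtain ⟨ψ, hψ, hφψ⟩ := exists_measurable_leftInverse_phiAff hV b
    obtain ⟨α, hα, hαμ, hle⟩ := exists_map_eq_and_tvDist_le (measurable_phiAff V b) hψ hφψ μ ν
    exact ⟨_, ⟨α, hα, ⟨V, b, hV, hαμ⟩, rfl⟩, hle⟩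
  · rintro _ ⟨α, hα, ⟨V, b, hV, rfl⟩, rfl⟩
    exact ⟨_, ⟨V, b, hV, rfl⟩, tvDist_map_le (measurable_phiAff V b)⟩

theorem projection_eq_embedding_tv {m n : ℕ} (hmn : m ≤ n)
    (μ : Measure (EuclideanSpace ℝ (Fin m))) (ν : Measure (EuclideanSpace ℝ (Fin n)))
    [IsProbabilityMeasure μ] [IsProbabilityMeasure ν] :
    sInf {r : ℝ | ∃ (V : Matrix (Fin m) (Fin n) ℝ) (b : EuclideanSpace ℝ (Fin m)),
        V * V.transpose = 1 ∧ r = tvDist μ (ν.map (phiAff V b))} =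
    sInf {r : ℝ | ∃ α : Measure (EuclideanSpace ℝ (Fin n)), IsProbabilityMeasure α ∧
        (∃ (V : Matrix (Fin m) (Fin n) ℝ) (b : EuclideanSpace ℝ (Fin m)),
          V * V.transpose = 1 ∧ α.map (phiAff V b) = μ) ∧
        r = tvDist α ν} :=
  projection_eq_embedding_tv_general μ ν
end
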